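/- Suppose R is F-finite and F-pure, and let u be a generator of the socle of E, i.e., u ∈ E with (0 :_E 𝔪) = Ru and u ≠ 0. Let P = {r ∈ R : r ⊗ u = 0 in R^{(n)} ⊗_R E for all sufficiently large n} (the splitting prime of Aberbach and Enescu). Then P is a proper Φ(E)-special ideal of R that contains every proper Φ(E)-special ideal of R; that is, P equals the unique largest Φ(E)-special proper ideal of R. -/

import Mathlib

open TensorProduct IsLocalRing DirectSum

universe u v

/-! ### Frobenius twists and base change -/

/-- `R` viewed as an algebra over itself via the `n`-th power of the Frobenius
endomorphism; this plays the role of `R^{(n)}` (an `R`-module via `r • s = r ^ p ^ n * s`). -/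
def FrobAlg (R : Type u) (p n : ℕ) [CommRing R] [Fact p.Prime] [CharP R p] : Type u := R

namespace FrobAlg

variable (R : Type u) (p n : ℕ) [CommRing R] [Fact p.Prime] [CharP R p]

instance : CommRing (FrobAlg R p n) := inferInstanceAs (CommRing R)

instance : Algebra R (FrobAlg R p n) :=
  RingHom.toAlgebra (show R →+* FrobAlg R p n from (frobenius R p) ^ n)

/-- The canonical identification of `R` with the underlying set of `R^{(n)}`. -/
def of (r : R) : FrobAlg R p n := r

end FrobAlg

/-- The Frobenius base change `R^{(n)} ⊗_R M` of an `R`-module `M` along the `n`-th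
power of the Frobenius endomorphism of `R`. -/
def FrobBC (R : Type u) (p n : ℕ) [CommRing R] [Fact p.Prime] [CharP R p]
    (M : Type v) [AddCommGroup M] [Module R M] : Type (max u v) :=
  FrobAlg R p n ⊗[R] M

namespace FrobBC

variable (R : Type u) (p n : ℕ) [CommRing R] [Fact p.Prime] [CharP R p]
  (M : Type v) [AddCommGroup M] [Module R M]

noncomputable instance : AddCommGroup (FrobBC R p n M) :=
  inferInstanceAs (AddCommGroup (FrobAlg R p n ⊗[R] M))

/-- The `R`-module structure on `R^{(n)} ⊗_R M` given by multiplication on the first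
factor. -/
noncomputable instance : Module R (FrobBC R p n M) :=
  inferInstanceAs (Module (FrobAlg R p n) (FrobAlg R p n ⊗[R] M))

variable {M}

/-- The elementary tensor `r ⊗ m` in `R^{(n)} ⊗_R M`. -/
noncomputable def tmul (r : R) (m : M) : FrobBC R p n M := FrobAlg.of R p n r ⊗ₜ[R] m

end FrobBC

/-- `R` is `F`-pure if for every `R`-module `M` the natural map
`M → R^{(1)} ⊗_R M`, `m ↦ 1 ⊗ m`, is injective. -/
def IsFPure (R : Type u) (p : ℕ) [CommRing R] [Fact p.Prime] [CharP R p] : Prop :=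
  ∀ (M : Type u) [AddCommGroup M] [Module R M],
    Function.Injective fun m : M ↦ FrobBC.tmul R p 1 (1 : R) m

/-- An ideal `𝔞` of `R` is fully `Φ(E)`-special if for every `n ≥ 1`, every `r ∈ 𝔞` and
every `e ∈ (0 :_E 𝔞)`, the element `r ⊗ e` is zero in `R^{(n)} ⊗_R E`. -/
def IsFullyPhiSpecial (R : Type u) (p : ℕ) [CommRing R] [Fact p.Prime] [CharP R p]
    (E : Type v) [AddCommGroup E] [Module R E] (𝔞 : Ideal R) : Prop :=
  ∀ n : ℕ, 1 ≤ n → ∀ r ∈ 𝔞, ∀ e : E, (∀ a ∈ 𝔞, a • e = 0) → FrobBC.tmul R p n r e = 0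

/-! ### The module `Φ(E)` and the Frobenius shift -/

/-- The Frobenius `a ↦ a ^ p`, as an `R`-algebra map `R^{(n)} → R^{(n+1)}`. -/
def frobStepAlg (R : Type u) (p n : ℕ) [CommRing R] [Fact p.Prime] [CharP R p] :
    FrobAlg R p n →ₐ[R] FrobAlg R p (n + 1) :=
  { (show FrobAlg R p n →+* FrobAlg R p (n + 1) from frobenius R p) with
    commutes' := fun r => by
      show frobenius R p (((frobenius R p) ^ n) r) = ((frobenius R p) ^ (n + 1)) r
      rw [pow_succ']
      rfl }

/-- The Frobenius `a ↦ a ^ p`, as an `R`-linear map `R^{(n)} → R^{(n+1)}`. -/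
def frobStep (R : Type u) (p n : ℕ) [CommRing R] [Fact p.Prime] [CharP R p] :
    FrobAlg R p n →ₗ[R] FrobAlg R p (n + 1) :=
  (frobStepAlg R p n).toLinearMap

/-- The graded module `Φ(E) = ⊕_{n ≥ 0} R^{(n)} ⊗_R E`. -/
def PhiModule (R : Type u) (p : ℕ) [CommRing R] [Fact p.Prime] [CharP R p]
    (E : Type v) [AddCommGroup E] [Module R E] : Type (max u v) :=
  ⨁ n : ℕ, FrobBC R p n E

namespace PhiModule

variable (R : Type u) (p : ℕ) [CommRing R] [Fact p.Prime] [CharP R p]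
  (E : Type v) [AddCommGroup E] [Module R E]

noncomputable instance : AddCommGroup (PhiModule R p E) :=
  inferInstanceAs (AddCommGroup (⨁ n : ℕ, FrobBC R p n E))

noncomputable instance : Module R (PhiModule R p E) :=
  inferInstanceAs (Module R (⨁ n : ℕ, FrobBC R p n E))

/-- The inclusion of the `n`-th component into `Φ(E)`. -/
noncomputable def of (n : ℕ) (g : FrobBC R p n E) : PhiModule R p E :=
  DirectSum.of (fun m : ℕ => FrobBC R p m E) n g

/-- The Frobenius-semilinear shift operator `x` on `Φ(E)`, sending an element
`r ⊗ e` of the `n`-th component to `r ^ p ⊗ e` in the `(n+1)`-th component. -/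
noncomputable def shift : PhiModule R p E →+ PhiModule R p E :=
  DirectSum.toAddMonoid fun n =>
    (DirectSum.of (fun m : ℕ => FrobBC R p m E) (n + 1)).comp
      (TensorProduct.map (frobStep R p n) (LinearMap.id (R := R) (M := E))).toAddMonoidHom

end PhiModule

/-- An ideal `𝔞` of `R` is `Φ(E)`-special if it is the annihilator of an
`R[x,f]`-submodule of `Φ(E)`, i.e. of an `R`-submodule stable under the shift operator. -/
def IsPhiSpecial (R : Type u) (p : ℕ) [CommRing R] [Fact p.Prime] [CharP R p]
    (E : Type v) [AddCommGroup E] [Module R E] (𝔞 : Ideal R) : Prop :=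
  ∃ N : Submodule R (PhiModule R p E),
    (∀ g ∈ N, PhiModule.shift R p E g ∈ N) ∧ 𝔞 = N.annihilator

/-! ### Further notions -/

/-- The `q`-th bracket (Frobenius) power `I^{[q]}` of an ideal: the ideal generated by
the `q`-th powers of the elements of `I`. -/
def Ideal.bracketPow {S : Type u} [CommRing S] (I : Ideal S) (q : ℕ) : Ideal S :=
  Ideal.span ((fun x => x ^ q) '' (I : Set S))

/-- A Noetherian local ring is regular if its maximal ideal can be generated by
`dim S` elements. -/
def IsRegularLocal (S : Type u) [CommRing S] [IsLocalRing S] : Prop :=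
  ∃ s : Finset S, (s.card : WithBot (WithTop ℕ)) = ringKrullDim S ∧
    Ideal.span (s : Set S) = maximalIdeal S

/-- An ideal `𝔟` of `R` is uniformly `F`-compatible if for every `n ≥ 1` and every
`R`-linear map `φ : R^{(n)} → R` one has `φ(𝔟) ⊆ 𝔟`. -/
def UniformlyFCompatible (R : Type u) (p : ℕ) [CommRing R] [Fact p.Prime] [CharP R p]
    (𝔟 : Ideal R) : Prop :=
  ∀ n : ℕ, 1 ≤ n → ∀ φ : FrobAlg R p n →ₗ[R] R, ∀ b ∈ 𝔟, φ (FrobAlg.of R p n b) ∈ 𝔟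

/-- `R` is `F`-finite if `R^{(1)}` is a finitely generated `R`-module. -/
def IsFFinite (R : Type u) (p : ℕ) [CommRing R] [Fact p.Prime] [CharP R p] : Prop :=
  Module.Finite R (FrobAlg R p 1)

/-- A Noetherian local ring `T` of characteristic `p` is strongly `F`-regular in the
sense of Lyubeznik and Smith if the tight closure of `0` in the injective envelope of
the residue field of `T` is zero. -/
def IsStronglyFRegularLS (T : Type u) (p : ℕ) [CommRing T] [IsLocalRing T]
    [Fact p.Prime] [CharP T p] : Prop :=
  ∀ (ET : Type u) [AddCommGroup ET] [Module T ET],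
    Module.Injective T ET →
    ∀ ι : (T ⧸ maximalIdeal T) →ₗ[T] ET, Function.Injective ι →
    (∀ N : Submodule T ET, N ⊓ LinearMap.range ι = ⊥ → N = ⊥) →
    ∀ m : ET,
      (∃ c : T, (∀ P ∈ minimalPrimes T, c ∉ P) ∧
        ∃ N₀ : ℕ, ∀ n : ℕ, N₀ ≤ n → FrobBC.tmul T p n c m = 0) → m = 0

/-- `Q` is a minimal primary decomposition of the ideal `𝔄`: the `Q i` are primary,
`𝔄` is their intersection, their radicals are pairwise distinct, and none of them
contains the intersection of the others. -/
def IsMinimalPrimaryDecomposition {S : Type u} [CommRing S] (𝔄 : Ideal S) {t : ℕ}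
    (Q : Fin t → Ideal S) : Prop :=
  𝔄 = ⨅ i, Q i ∧ (∀ i, (Q i).IsPrimary) ∧
    (Function.Injective fun i => (Q i).radical) ∧
    ∀ i, ¬ (⨅ j, ⨅ (_ : j ≠ i), Q j) ≤ Q i

/-!
The annihilators of the shift-stable submodules `N_m ⊆ Φ(E)` spanned by the elements `1 ⊗ u`
of degree `≥ m` form an ascending chain of ideals; since `R` is Noetherian it stabilizes, and its
final value is the splitting prime `P`, which is thus `Φ(E)`-special. It is proper because
`F`-purity makes `1 ⊗ u` nonzero in every degree.

For maximality, let `𝔟 = ann N` be a proper special ideal and `r ∈ 𝔟` with `r ⊗ u ≠ 0` in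
`R^{(n)} ⊗ E`. As `R^{(n)}` is finitely presented and `E` is injective, `R^{(n)} ⊗ E` embeds in
`Hom(Hom(R^{(n)}, R), E)`, so `φ(r) u ≠ 0` for some `φ : R^{(n)} → R`. Since `u` is killed by
`𝔪`, `φ(r)` is a unit, and rescaling gives `φ(r) = 1`. Then `c ⊗ e ↦ φ(c) ⊗ e` undoes `r • xⁿ`
degree by degree, so `r xⁿ N = 0` forces `N = 0`, i.e. `𝔟 = R`.
-/

namespace Module

lemma Injective.exact_lcomp {R : Type u} [CommRing R] {X Y : Type*} {E Z : Type v}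
    [AddCommGroup E] [Module R E] [AddCommGroup X] [Module R X] [AddCommGroup Y] [Module R Y]
    [AddCommGroup Z] [Module R Z] [Module.Injective R E] {f : X →ₗ[R] Y} {g : Y →ₗ[R] Z}
    (hfg : Function.Exact f g) :
    Function.Exact (LinearMap.lcomp R E g) (LinearMap.lcomp R E f) := by
  intro h
  refine ⟨fun hh ↦ ?_, ?_⟩
  · have hfg' : Function.Exact f g.rangeRestrict := fun y ↦ by
      rw [← hfg y, ← Submodule.coe_eq_zero, LinearMap.codRestrict_apply]
    obtain ⟨k₀, rfl⟩ := ((LinearMap.exact_lcomp_of_exact_of_surjective E hfg'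
      g.surjective_rangeRestrict) h).1 hh
    obtain ⟨k, hk⟩ := Module.Injective.out _ (LinearMap.range g).injective_subtype k₀
    exact ⟨k, LinearMap.ext fun y ↦ hk (g.rangeRestrict y)⟩
  · rintro ⟨k, rfl⟩
    rw [LinearMap.lcomp_apply', LinearMap.lcomp_apply', LinearMap.comp_assoc,
      hfg.linearMap_comp_eq_zero, LinearMap.comp_zero]

section TensorToHomDual

variable (R : Type u) [CommRing R] (M : Type v) (E : Type*) [AddCommGroup M] [Module R M]
  [AddCommGroup E] [Module R E]

noncomputable def tensorToHomDual : M ⊗[R] E →ₗ[R] Dual R M →ₗ[R] E :=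
  dualTensorHom R (Dual R M) E ∘ₗ (Dual.eval R M).rTensor E

@[simp]
lemma tensorToHomDual_tmul (m : M) (e : E) (φ : Dual R M) :
    tensorToHomDual R M E (m ⊗ₜ e) φ = φ m • e := rfl

lemma tensorToHomDual_bijective [Module.Finite R M] [Module.Projective R M] :
    Function.Bijective (tensorToHomDual R M E) :=
  (dualTensorHom_bijective ..).comp ((evalEquiv R M).rTensor E).bijective

variable {M} in
lemma tensorToHomDual_comp_rTensor {N : Type*} [AddCommGroup N] [Module R N] (f : M →ₗ[R] N) :
    LinearMap.lcomp R E f.dualMap ∘ₗ tensorToHomDual R M E =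
      tensorToHomDual R N E ∘ₗ f.rTensor E := by
  ext m e φ
  simp

end TensorToHomDual

variable (R : Type u) [CommRing R] {M : Type v} [AddCommGroup M] [Module R M] {E : Type u}
  [AddCommGroup E] [Module R E] [Module.Injective R E] [Module.FinitePresentation R M]

lemma tensorToHomDual_injective : Function.Injective (tensorToHomDual R M E) := by
  obtain ⟨n, m, π, A, hπ, hAπ⟩ := Module.FinitePresentation.exists_fin' R M
  exact LinearMap.injective_of_surjective_of_injective_of_right_exact
    (A.rTensor E) (π.rTensor E) (LinearMap.lcomp R E A.dualMap) (LinearMap.lcomp R E π.dualMap)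
    _ _ _ (tensorToHomDual_comp_rTensor R E A) (tensorToHomDual_comp_rTensor R E π)
    (rTensor_exact E hAπ hπ)
    (Injective.exact_lcomp (LinearMap.exact_lcomp_of_exact_of_surjective R hAπ hπ :
      Function.Exact π.dualMap A.dualMap))
    (tensorToHomDual_bijective R _ E).2 (tensorToHomDual_bijective R _ E).1
    (LinearMap.rTensor_surjective E hπ)

variable {R} in
lemma exists_dual_smul_ne_zero_of_tmul_ne_zero {m : M} {e : E} (h : m ⊗ₜ[R] e ≠ 0) :
    ∃ φ : Dual R M, φ m • e ≠ 0 := by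
  by_contra! h'
  exact h (tensorToHomDual_injective R (LinearMap.ext h' |>.trans (map_zero _).symm))

end Module

namespace FrobAlg

variable {R : Type u} [CommRing R] {p : ℕ} [Fact p.Prime] [CharP R p] {n : ℕ}

lemma smul_of (r a : R) : r • of R p n a = of R p n (r ^ p ^ n * a) := by
  show of R p n (((frobenius R p) ^ n) r * a) = _
  rw [RingHom.coe_pow, iterate_frobenius]

end FrobAlg

lemma IsFFinite.finite_frobAlg {R : Type u} [CommRing R] {p : ℕ} [Fact p.Prime] [CharP R p]
    (h : IsFFinite R p) (n : ℕ) : Module.Finite R (FrobAlg R p n) := by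
  change ((frobenius R p) ^ n).Finite
  induction n with
  | zero => exact RingHom.Finite.id R
  | succ n ih => rw [pow_succ]; exact ih.comp h

namespace FrobBC

variable {R : Type u} [CommRing R] {p : ℕ} [Fact p.Prime] [CharP R p]
  {M : Type v} [AddCommGroup M] [Module R M]

section

variable {n : ℕ}

lemma smul_tmul' (r a : R) (m : M) : r • tmul R p n a m = tmul R p n (r * a) m := rfl

lemma tmul_smul (a r : R) (m : M) : tmul R p n a (r • m) = r ^ p ^ n • tmul R p n a m := by
  show FrobAlg.of R p n a ⊗ₜ[R] (r • m) = FrobAlg.of R p n (r ^ p ^ n * a) ⊗ₜ[R] m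
  rw [← TensorProduct.smul_tmul, FrobAlg.smul_of]

@[elab_as_elim]
lemma induction_on {motive : FrobBC R p n M → Prop} (x : FrobBC R p n M) (zero : motive 0)
    (tmul : ∀ (a : R) (m : M), motive (tmul R p n a m))
    (add : ∀ x y, motive x → motive y → motive (x + y)) : motive x :=
  TensorProduct.induction_on x zero tmul add

end

noncomputable def toSelf : FrobBC R p 0 M →+ M :=
  TensorProduct.liftAddHom (smulAddHom R M) fun r c m ↦ by
    obtain ⟨c, rfl⟩ : ∃ c' : R, FrobAlg.of R p 0 c' = c := ⟨c, rfl⟩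
    rw [FrobAlg.smul_of]
    show (r ^ p ^ 0 * c) • m = c • r • m
    rw [pow_zero, pow_one, mul_smul, smul_comm]

lemma toSelf_tmul (a : R) (m : M) : toSelf (tmul R p 0 a m) = a • m := rfl

noncomputable def succToOne (n : ℕ) : FrobBC R p (n + 1) M →+ FrobBC R p 1 (FrobBC R p n M) :=
  TensorProduct.liftAddHom
    ((LinearMap.toAddMonoidHom'.comp
      (TensorProduct.mk R (FrobAlg R p 1) (FrobBC R p n M)).toAddMonoidHom).compl₂
        (TensorProduct.mk R (FrobAlg R p n) M 1).toAddMonoidHom)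
    fun r c m ↦ by
      obtain ⟨c, rfl⟩ : ∃ c' : R, FrobAlg.of R p (n + 1) c' = c := ⟨c, rfl⟩
      rw [FrobAlg.smul_of]
      show tmul R p 1 (r ^ p ^ (n + 1) * c) (tmul R p n 1 m) = tmul R p 1 c (tmul R p n 1 (r • m))
      rw [tmul_smul, tmul_smul, smul_tmul', pow_one, ← pow_mul, ← pow_succ]

lemma succToOne_tmul (n : ℕ) (a : R) (m : M) :
    succToOne n (tmul R p (n + 1) a m) = tmul R p 1 a (tmul R p n 1 m) := rfl

end FrobBC

lemma IsFPure.tmul_one_injective {R : Type u} [CommRing R] {p : ℕ} [Fact p.Prime] [CharP R p]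
    (h : IsFPure R p) (M : Type u) [AddCommGroup M] [Module R M] (n : ℕ) :
    Function.Injective fun m : M ↦ FrobBC.tmul R p n 1 m := by
  induction n generalizing M with
  | zero =>
    intro m m' hm
    simpa only [FrobBC.toSelf_tmul, one_smul] using congrArg FrobBC.toSelf hm
  | succ n ih =>
    intro m m' hm
    have h1 := congrArg (FrobBC.succToOne n) hm
    simp only [FrobBC.succToOne_tmul] at h1
    exact ih M (h _ h1)

lemma IsFPure.tmul_one_ne_zero {R : Type u} [CommRing R] {p : ℕ} [Fact p.Prime] [CharP R p]
    (h : IsFPure R p) {M : Type u} [AddCommGroup M] [Module R M] {m : M} (hm : m ≠ 0) (n : ℕ) :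
    FrobBC.tmul R p n 1 m ≠ 0 := fun h0 ↦
  hm (h.tmul_one_injective M n (h0.trans (TensorProduct.tmul_zero _ _).symm))

namespace PhiModule

variable {R : Type u} [CommRing R] {p : ℕ} [Fact p.Prime] [CharP R p]
  {E : Type v} [AddCommGroup E] [Module R E]

@[elab_as_elim]
lemma induction_on {motive : PhiModule R p E → Prop} (g : PhiModule R p E) (zero : motive 0)
    (of : ∀ (n : ℕ) (x : FrobBC R p n E), motive (of R p E n x))
    (add : ∀ g h, motive g → motive h → motive (g + h)) : motive g :=
  DirectSum.induction_on g zero of add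

noncomputable def shiftComponent (n : ℕ) : FrobBC R p n E →+ FrobBC R p (n + 1) E :=
  (TensorProduct.map (frobStep R p n) (LinearMap.id (R := R) (M := E))).toAddMonoidHom

lemma shiftComponent_tmul (n : ℕ) (a : R) (e : E) :
    shiftComponent n (FrobBC.tmul R p n a e) = FrobBC.tmul R p (n + 1) (a ^ p) e := rfl

lemma shiftComponent_smul (n : ℕ) (r : R) (x : FrobBC R p n E) :
    shiftComponent n (r • x) = r ^ p • shiftComponent n x := by
  induction x using FrobBC.induction_on with
  | zero => simp only [smul_zero, map_zero]
  | tmul a e =>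
    rw [FrobBC.smul_tmul', shiftComponent_tmul, shiftComponent_tmul, FrobBC.smul_tmul', mul_pow]
  | add x y hx hy => simp only [smul_add, map_add, hx, hy]

lemma shift_of (n : ℕ) (x : FrobBC R p n E) :
    shift R p E (of R p E n x) = of R p E (n + 1) (shiftComponent n x) :=
  DirectSum.toAddMonoid_of _ _ _

lemma smul_of (r : R) (n : ℕ) (x : FrobBC R p n E) : r • of R p E n x = of R p E n (r • x) :=
  (DirectSum.lof R ℕ (fun m ↦ FrobBC R p m E) n |>.map_smul r x).symm

lemma shift_smul (r : R) (g : PhiModule R p E) : shift R p E (r • g) = r ^ p • shift R p E g := by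
  induction g using induction_on with
  | zero => simp only [smul_zero, map_zero]
  | of n x => rw [smul_of, shift_of, shift_of, shiftComponent_smul, smul_of]
  | add g h hg hh => simp only [smul_add, map_add, hg, hh]

variable (R p E) in
noncomputable def component (k : ℕ) : PhiModule R p E →ₗ[R] FrobBC R p k E :=
  DirectSum.component R ℕ (fun n ↦ FrobBC R p n E) k

lemma component_of_self (n : ℕ) (x : FrobBC R p n E) : component R p E n (of R p E n x) = x :=
  DirectSum.of_eq_same (β := fun m ↦ FrobBC R p m E) n x

lemma component_of_of_ne {n k : ℕ} (x : FrobBC R p n E) (h : n ≠ k) :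
    component R p E k (of R p E n x) = 0 :=
  DirectSum.of_eq_of_ne (β := fun m ↦ FrobBC R p m E) n k x h.symm

lemma component_shift (k : ℕ) (g : PhiModule R p E) :
    component R p E (k + 1) (shift R p E g) = shiftComponent k (component R p E k g) := by
  induction g using induction_on with
  | zero => simp only [map_zero]
  | of n x =>
    rw [shift_of]
    by_cases h : n = k
    · subst h
      rw [component_of_self, component_of_self]
    · rw [component_of_of_ne _ (by omega), component_of_of_ne _ h, map_zero]
  | add g h hg hh => simp only [map_add, hg, hh]

noncomputable def iterShiftComponent (k : ℕ) : ∀ j : ℕ, FrobBC R p k E →+ FrobBC R p (k + j) E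
  | 0 => AddMonoidHom.id _
  | j + 1 => (shiftComponent (k + j)).comp (iterShiftComponent k j)

lemma iterShiftComponent_tmul (k j : ℕ) (a : R) (e : E) :
    iterShiftComponent k j (FrobBC.tmul R p k a e) = FrobBC.tmul R p (k + j) (a ^ p ^ j) e := by
  induction j with
  | zero => rw [pow_zero, pow_one]; rfl
  | succ j ih =>
    show shiftComponent (k + j) (iterShiftComponent k j (FrobBC.tmul R p k a e)) = _
    rw [ih, shiftComponent_tmul, ← pow_mul, ← pow_succ]
    rfl

lemma component_shift_iterate (k j : ℕ) (g : PhiModule R p E) :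
    component R p E (k + j) ((shift R p E)^[j] g) =
      iterShiftComponent k j (component R p E k g) := by
  induction j with
  | zero => rfl
  | succ j ih =>
    rw [Function.iterate_succ_apply']
    exact (component_shift (k + j) _).trans (congrArg _ ih)

noncomputable def descent {n : ℕ} (ψ : FrobAlg R p n →ₗ[R] R) (k : ℕ) :
    FrobBC R p (k + n) E →+ FrobBC R p k E :=
  TensorProduct.liftAddHom
    ((LinearMap.toAddMonoidHom'.comp (TensorProduct.mk R (FrobAlg R p k) E).toAddMonoidHom).comp
      (ψ.toAddMonoidHom : FrobAlg R p (k + n) →+ FrobAlg R p k))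
    fun r c e ↦ by
      obtain ⟨c, rfl⟩ : ∃ c' : R, FrobAlg.of R p (k + n) c' = c := ⟨c, rfl⟩
      have key : ψ (r • FrobAlg.of R p (k + n) c) = r ^ p ^ k * ψ (FrobAlg.of R p n c) := by
        rw [FrobAlg.smul_of]
        change ψ (FrobAlg.of R p n (r ^ p ^ (k + n) * c)) = _
        rw [pow_add, pow_mul, ← FrobAlg.smul_of, map_smul, smul_eq_mul]
      show FrobBC.tmul R p k (ψ (r • FrobAlg.of R p (k + n) c)) e
        = FrobBC.tmul R p k (ψ (FrobAlg.of R p n c)) (r • e)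
      rw [key, FrobBC.tmul_smul, FrobBC.smul_tmul']

lemma descent_tmul {n : ℕ} (ψ : FrobAlg R p n →ₗ[R] R) (k : ℕ) (a : R) (e : E) :
    descent ψ k (FrobBC.tmul R p (k + n) a e) = FrobBC.tmul R p k (ψ (FrobAlg.of R p n a)) e := rfl

lemma descent_smul_iterShiftComponent {n : ℕ} (ψ : FrobAlg R p n →ₗ[R] R) {r : R}
    (hψ : ψ (FrobAlg.of R p n r) = 1) (k : ℕ) (x : FrobBC R p k E) :
    descent ψ k (r • iterShiftComponent k n x) = x := by
  induction x using FrobBC.induction_on with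
  | zero => simp only [map_zero, smul_zero]
  | tmul a e =>
    rw [iterShiftComponent_tmul, FrobBC.smul_tmul', descent_tmul, mul_comm, ← FrobAlg.smul_of,
      map_smul, hψ, smul_eq_mul, mul_one]
  | add x y hx hy => simp only [map_add, smul_add, hx, hy]

lemma eq_bot_of_shift_mem_of_mem_annihilator {N : Submodule R (PhiModule R p E)}
    (hN : ∀ g ∈ N, shift R p E g ∈ N) {n : ℕ} (ψ : FrobAlg R p n →ₗ[R] R) {r : R}
    (hψ : ψ (FrobAlg.of R p n r) = 1) (hr : r ∈ N.annihilator) : N = ⊥ := by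
  refine (Submodule.eq_bot_iff N).2 fun g hg ↦ DirectSum.ext_component R fun k ↦ ?_
  have hrg : r • (shift R p E)^[n] g = 0 :=
    Submodule.mem_annihilator.1 hr _ (Set.MapsTo.iterate hN n hg)
  calc component R p E k g
      = descent ψ k (r • iterShiftComponent k n (component R p E k g)) :=
        (descent_smul_iterShiftComponent ψ hψ k _).symm
    _ = descent ψ k (component R p E (k + n) (r • (shift R p E)^[n] g)) := by
        rw [(component R p E (k + n)).map_smul, component_shift_iterate]
    _ = 0 := by rw [hrg, map_zero, map_zero]

lemma of_eq_zero_iff {n : ℕ} {x : FrobBC R p n E} : of R p E n x = 0 ↔ x = 0 :=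
  map_eq_zero_iff _ (DirectSum.of_injective n)

variable (R p) in
noncomputable def tailSpan (u : E) (m : ℕ) : Submodule R (PhiModule R p E) :=
  Submodule.span R ((fun n ↦ of R p E n (FrobBC.tmul R p n 1 u)) '' Set.Ici m)

lemma mem_annihilator_tailSpan {u : E} {m : ℕ} {r : R} :
    r ∈ (tailSpan R p u m).annihilator ↔ ∀ n, m ≤ n → FrobBC.tmul R p n r u = 0 := by
  simp only [tailSpan, Submodule.mem_annihilator_span, Subtype.forall, Set.forall_mem_image,
    Set.mem_Ici, smul_of, FrobBC.smul_tmul', mul_one, of_eq_zero_iff]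

lemma annihilator_tailSpan_monotone (u : E) :
    Monotone fun m ↦ (tailSpan R p u m).annihilator := fun _ _ h ↦
  Submodule.annihilator_mono (Submodule.span_mono (Set.image_mono (Set.Ici_subset_Ici.2 h)))

lemma shift_mem_tailSpan {u : E} {m : ℕ} {g : PhiModule R p E} (hg : g ∈ tailSpan R p u m) :
    shift R p E g ∈ tailSpan R p u m := by
  induction hg using Submodule.span_induction with
  | mem g hg =>
    obtain ⟨n, hn, rfl⟩ := hg
    rw [shift_of, shiftComponent_tmul, one_pow]
    exact Submodule.subset_span ⟨n + 1, Set.mem_Ici.2 (hn.trans n.le_succ), rfl⟩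
  | zero => rw [map_zero]; exact zero_mem _
  | add g h _ _ hg hh => rw [map_add]; exact add_mem hg hh
  | smul a g _ hg => rw [shift_smul]; exact Submodule.smul_mem _ _ hg

end PhiModule

lemma IsPhiSpecial.eq_top_of_dual_eq_one {R : Type u} [CommRing R] {p : ℕ} [Fact p.Prime]
    [CharP R p] {E : Type v} [AddCommGroup E] [Module R E] {𝔟 : Ideal R}
    (h : IsPhiSpecial R p E 𝔟) {n : ℕ} {r : R} (hr : r ∈ 𝔟) (ψ : FrobAlg R p n →ₗ[R] R)
    (hψ : ψ (FrobAlg.of R p n r) = 1) : 𝔟 = ⊤ := by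
  obtain ⟨N, hN, rfl⟩ := h
  rw [PhiModule.eq_bot_of_shift_mem_of_mem_annihilator hN ψ hψ hr, Submodule.annihilator_bot]

section SplittingPrime

variable {R : Type u} [CommRing R] [IsNoetherianRing R] [IsLocalRing R] {p : ℕ} [Fact p.Prime]
  [CharP R p] {E : Type u} [AddCommGroup E] [Module R E] [Module.Injective R E]

lemma exists_dual_eq_one_of_tmul_ne_zero (hFF : IsFFinite R p) {u : E}
    (hu : ∀ a ∈ maximalIdeal R, a • u = 0) {n : ℕ} {r : R} (h : FrobBC.tmul R p n r u ≠ 0) :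
    ∃ ψ : FrobAlg R p n →ₗ[R] R, ψ (FrobAlg.of R p n r) = 1 := by
  have := hFF.finite_frobAlg n
  have := Module.finitePresentation_of_finite R (FrobAlg R p n)
  obtain ⟨φ, hφ⟩ := Module.exists_dual_smul_ne_zero_of_tmul_ne_zero h
  have hunit : IsUnit (φ (FrobAlg.of R p n r)) :=
    IsLocalRing.notMem_maximalIdeal.1 fun hm ↦ hφ (hu _ hm)
  refine ⟨hunit.unit⁻¹ • φ, ?_⟩
  rw [LinearMap.smul_apply, Units.smul_def, smul_eq_mul, hunit.val_inv_mul]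

lemma IsPhiSpecial.tmul_eq_zero_of_mem (hFF : IsFFinite R p) {u : E}
    (hu : ∀ a ∈ maximalIdeal R, a • u = 0) {𝔟 : Ideal R} (h𝔟 : 𝔟 ≠ ⊤) (hs : IsPhiSpecial R p E 𝔟)
    {r : R} (hr : r ∈ 𝔟) (n : ℕ) : FrobBC.tmul R p n r u = 0 := by
  by_contra h
  obtain ⟨ψ, hψ⟩ := exists_dual_eq_one_of_tmul_ne_zero hFF hu h
  exact h𝔟 (hs.eq_top_of_dual_eq_one hr ψ hψ)

end SplittingPrime

theorem splitting_prime_is_largest_special_ideal_general (R : Type u) [CommRing R] [IsNoetherianRing R] [IsLocalRing R]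
    (p : ℕ) [Fact p.Prime] [CharP R p]
    (E : Type u) [AddCommGroup E] [Module R E]
    (hE : Module.Injective R E)
    (hFF : IsFFinite R p) (hFpure : IsFPure R p)
    (u : E) (hu : u ≠ 0)
    (hsocle : Submodule.torsionBySet R E (maximalIdeal R : Set R) = Submodule.span R {u}) :
    ∃ P : Ideal R,
      (P : Set R) = {r : R | ∃ N₀ : ℕ, ∀ n : ℕ, N₀ ≤ n → FrobBC.tmul R p n r u = 0} ∧
      P ≠ ⊤ ∧ IsPhiSpecial R p E P ∧
      ∀ 𝔟 : Ideal R, 𝔟 ≠ ⊤ → IsPhiSpecial R p E 𝔟 → 𝔟 ≤ P := by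
  have hu𝔪 : ∀ a ∈ maximalIdeal R, a • u = 0 := fun a ha ↦
    (Submodule.mem_torsionBySet_iff _ u).1 (hsocle ▸ Submodule.mem_span_singleton_self u) ⟨a, ha⟩
  obtain ⟨N₀, hN₀⟩ := monotone_stabilizes_iff_noetherian.mpr inferInstance
    ⟨_, PhiModule.annihilator_tailSpan_monotone (R := R) (p := p) u⟩
  refine ⟨(PhiModule.tailSpan R p u N₀).annihilator, ?_, ?_,
    ⟨_, fun _ ↦ PhiModule.shift_mem_tailSpan, rfl⟩,
    fun 𝔟 h𝔟 hs r hr ↦ PhiModule.mem_annihilator_tailSpan.2 fun n _ ↦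
      hs.tmul_eq_zero_of_mem hFF hu𝔪 h𝔟 hr n⟩
  · ext r
    refine ⟨fun hr ↦ ⟨N₀, PhiModule.mem_annihilator_tailSpan.1 hr⟩, fun ⟨M₀, hM₀⟩ ↦ ?_⟩
    have hstab : (PhiModule.tailSpan R p u N₀).annihilator
        = (PhiModule.tailSpan R p u (max N₀ M₀)).annihilator := hN₀ _ (le_max_left _ _)
    rw [SetLike.mem_coe, hstab, PhiModule.mem_annihilator_tailSpan]
    exact fun n hn ↦ hM₀ n ((le_max_right _ _).trans hn)
  · rw [Ne, Ideal.eq_top_iff_one, PhiModule.mem_annihilator_tailSpan]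
    exact fun h ↦ hFpure.tmul_one_ne_zero hu N₀ (h N₀ le_rfl)

theorem splitting_prime_is_largest_special_ideal (R : Type u) [CommRing R] [IsNoetherianRing R] [IsLocalRing R]
    (p : ℕ) [Fact p.Prime] [CharP R p]
    (E : Type u) [AddCommGroup E] [Module R E]
    (hE : Module.Injective R E)
    (ι : (R ⧸ maximalIdeal R) →ₗ[R] E) (hι : Function.Injective ι)
    (hess : ∀ N : Submodule R E, N ⊓ LinearMap.range ι = ⊥ → N = ⊥)
    (hFF : IsFFinite R p) (hFpure : IsFPure R p)
    (u : E) (hu : u ≠ 0)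
    (hsocle : Submodule.torsionBySet R E (maximalIdeal R : Set R) = Submodule.span R {u}) :
    ∃ P : Ideal R,
      (P : Set R) = {r : R | ∃ N₀ : ℕ, ∀ n : ℕ, N₀ ≤ n → FrobBC.tmul R p n r u = 0} ∧
      P ≠ ⊤ ∧ IsPhiSpecial R p E P ∧
      ∀ 𝔟 : Ideal R, 𝔟 ≠ ⊤ → IsPhiSpecial R p E 𝔟 → 𝔟 ≤ P :=
  splitting_prime_is_largest_special_ideal_general R p E hE hFF hFpure u hu hsocle
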